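/- Let F = ℚ(ζ₇)⁺ with ring of integers O_F = ℤ[α], α = ζ₇ + ζ₇⁻¹. Then the different ideal ∂_F of F/ℚ is the principal ideal generated by (2 - α)², and δ = (2 - α)² is a totally positive generator of ∂_F. -/

import Mathlib

/-!
Since `𝓞 F = ℤ[a]` is monogenic, the different is generated by `f'(a)`, where
`f = X³ + X² - 2X - 1` is the minimal polynomial of `a` (irreducible, having no root mod 2).
The relation `f(a) = 0` makes `2a² - 3` a unit with `f'(a) (2a² - 3) = (2 - a)²`, and
`(2 - a)²` is totally positive, being the square of a nonzero element.
-/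

open Polynomial NumberField

section Monogenic

variable (A K : Type*) {L B : Type*} [CommRing A] [Field K] [CommRing B] [Field L]
  [Algebra A K] [Algebra B L] [Algebra A B] [Algebra K L] [Algebra A L]
  [IsScalarTower A K L] [IsScalarTower A B L] [IsDomain A] [IsFractionRing A K]

theorem Algebra.adjoin_algebraMap_eq_top_of_adjoin_eq_top [Algebra.IsAlgebraic K L]
    [IsIntegralClosure B A L] {x : B} (hx : Algebra.adjoin A {x} = ⊤) :
    Algebra.adjoin K {algebraMap B L x} = ⊤ := by
  have : Algebra.IsAlgebraic A L := by
    have := IsLocalization.isAlgebraic K (nonZeroDivisors A)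
    exact Algebra.IsAlgebraic.trans A K L
  refine Algebra.eq_top_iff.mpr fun z ↦ ?_
  obtain ⟨y, hy, hyz⟩ :=
    IsAlgebraic.exists_integral_multiple (Algebra.IsAlgebraic.isAlgebraic (R := A) z)
  have hyK : algebraMap A K y ≠ 0 := (map_ne_zero_iff _ (IsFractionRing.injective A K)).mpr hy
  have hint : y • z ∈ (Algebra.adjoin A {x}).map (IsScalarTower.toAlgHom A B L) := by
    rw [hx]
    exact ⟨_, Algebra.mem_top, IsIntegralClosure.algebraMap_mk' B _ hyz⟩
  have hmem : y • z ∈ (Algebra.adjoin K {algebraMap B L x}).restrictScalars A := by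
    rw [AlgHom.map_adjoin_singleton, IsScalarTower.coe_toAlgHom'] at hint
    have hle : Algebra.adjoin A {algebraMap B L x} ≤
        (Algebra.adjoin K {algebraMap B L x}).restrictScalars A := by
      rw [Subalgebra.restrictScalars_adjoin]
      exact le_sup_right
    exact hle hint
  rw [Subalgebra.mem_restrictScalars, ← algebraMap_smul K y z] at hmem
  simpa only [inv_smul_smul₀ hyK] using
    Subalgebra.smul_mem _ hmem (algebraMap A K y)⁻¹

variable (L) in
theorem differentIdeal_eq_span_aeval_derivative_minpoly [IsIntegrallyClosed A]
    [IsDedekindDomain B] [Module.IsTorsionFree A B] [FiniteDimensional K L]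
    [IsIntegralClosure B A L] [Algebra.IsSeparable K L] {x : B}
    (hx : Algebra.adjoin A {x} = ⊤) :
    differentIdeal A B = Ideal.span {aeval x (derivative (minpoly A x))} := by
  rw [← conductor_mul_differentIdeal A K L x
    (Algebra.adjoin_algebraMap_eq_top_of_adjoin_eq_top A K hx),
    conductor_eq_top_of_adjoin_eq_top hx, Ideal.top_mul]

end Monogenic

theorem minpoly.isIntegrallyClosed_eq_of_irreducible_of_monic {R S : Type*} [CommRing R]
    [IsDomain R] [IsIntegrallyClosed R] [CommRing S] [IsDomain S] [Algebra R S]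
    [Module.IsTorsionFree R S] {x : S} {p : R[X]} (hirr : Irreducible p) (hmonic : p.Monic)
    (hp : Polynomial.aeval x p = 0) : minpoly R x = p := by
  have hx : IsIntegral R x := ⟨p, hmonic, hp⟩
  refine eq_of_monic_of_associated (minpoly.monic hx) hmonic ?_
  exact (minpoly.irreducible hx).associated_of_dvd hirr (minpoly.isIntegrallyClosed_dvd hx hp)

theorem IsPrimitiveRoot.add_inv_cubic_eq_zero {L : Type*} [Field L] {ζ : L}
    (hζ : IsPrimitiveRoot ζ 7) :
    (ζ + ζ⁻¹) ^ 3 + (ζ + ζ⁻¹) ^ 2 - 2 * (ζ + ζ⁻¹) - 1 = 0 := by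
  have h7 : ζ ^ 7 = 1 := hζ.pow_eq_one
  have hsum : 1 + ζ + ζ ^ 2 + ζ ^ 3 + ζ ^ 4 + ζ ^ 5 + ζ ^ 6 = 0 := by
    simpa [Finset.sum_range_succ] using hζ.geom_sum_eq_zero (by norm_num)
  rw [inv_eq_of_mul_eq_one_right (a := ζ) (b := ζ ^ 6) (by rw [← pow_succ']; exact h7)]
  linear_combination (ζ ^ 11 + ζ ^ 5 + ζ ^ 4 + 3 * ζ ^ 6 + 3 * ζ + 2) * h7 + hsum

theorem irreducible_X_pow_three_add_X_sq_sub_two_mul_X_sub_one :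
    Irreducible (X ^ 3 + X ^ 2 - 2 * X - 1 : ℤ[X]) := by
  have hmonic : (X ^ 3 + X ^ 2 - 2 * X - 1 : ℤ[X]).Monic := by monicity!
  refine hmonic.irreducible_of_irreducible_map (Int.castRingHom (ZMod 2)) _ ?_
  have hdeg : (X ^ 3 + X ^ 2 - 2 * X - 1 : ℤ[X]).natDegree = 3 := by compute_degree!
  have hmonic₂ := hmonic.map (Int.castRingHom (ZMod 2))
  rw [hmonic₂.irreducible_iff_roots_eq_zero_of_degree_le_three
      (by rw [hmonic.natDegree_map, hdeg]; norm_num) (by rw [hmonic.natDegree_map, hdeg]),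
    Multiset.eq_zero_iff_forall_notMem]
  intro x
  rw [mem_roots hmonic₂.ne_zero, IsRoot.def, eval_map]
  simp only [eval₂_add, eval₂_sub, eval₂_mul, eval₂_pow, eval₂_X, eval₂_one, eval₂_ofNat]
  revert x
  decide

theorem minpoly_int_eq_of_cubic_eq_zero {S : Type*} [CommRing S] [IsDomain S] [CharZero S]
    {x : S} (hx : x ^ 3 + x ^ 2 - 2 * x - 1 = 0) :
    minpoly ℤ x = X ^ 3 + X ^ 2 - 2 * X - 1 :=
  minpoly.isIntegrallyClosed_eq_of_irreducible_of_monic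
    irreducible_X_pow_three_add_X_sq_sub_two_mul_X_sub_one (by monicity!)
    (by simpa [map_ofNat] using hx)

theorem Ideal.span_three_mul_sq_add_two_mul_sub_two_eq {R : Type*} [CommRing R] {x : R}
    (hx : x ^ 3 + x ^ 2 - 2 * x - 1 = 0) :
    Ideal.span {3 * x ^ 2 + 2 * x - 2} = Ideal.span {(2 - x) ^ 2} := by
  have hunit : IsUnit (2 * x ^ 2 - 3) :=
    IsUnit.of_mul_eq_one (2 * x ^ 2 + 4 * x + 1) (by linear_combination (4 * x + 4) * hx)
  rw [← Ideal.span_singleton_mul_right_unit hunit]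
  congr 2
  linear_combination (6 * x - 2) * hx

theorem different_of_Q_zeta7_plus_general
    (K : Type*) [Field K] [NumberField K] (ζ : K) (hζ : IsPrimitiveRoot ζ 7)
    (F : IntermediateField ℚ K)
    (a : 𝓞 F) (haF : ((algebraMap (𝓞 F) F a : F) : K) = ζ + ζ⁻¹)
    (hgen : Algebra.adjoin ℤ {a} = ⊤) :
    differentIdeal ℤ (𝓞 F) = Ideal.span {(2 - a) ^ 2} ∧
    (∀ σ : F →+* ℝ, 0 < σ (algebraMap (𝓞 F) F ((2 - a) ^ 2))) := by
  have ha : a ^ 3 + a ^ 2 - 2 * a - 1 = 0 := by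
    apply (algebraMap F K).injective.comp (FaithfulSMul.algebraMap_injective (𝓞 F) F)
    have hcoe : ((algebraMap F K).comp (algebraMap (𝓞 F) F)) a = ζ + ζ⁻¹ := haF
    rw [← RingHom.coe_comp, map_sub, map_sub, map_add, map_pow, map_pow, map_mul, map_one,
      map_ofNat, hcoe, hζ.add_inv_cubic_eq_zero, map_zero]
  have ha₂ : 2 - a ≠ 0 := fun h ↦ by
    obtain rfl : a = 2 := (sub_eq_zero.mp h).symm
    norm_num at ha
  refine ⟨?_, fun σ ↦ ?_⟩
  · rw [differentIdeal_eq_span_aeval_derivative_minpoly ℤ ℚ F hgen,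
      minpoly_int_eq_of_cubic_eq_zero ha, ← Ideal.span_three_mul_sq_add_two_mul_sub_two_eq ha]
    simp [map_ofNat, derivative_pow]
  · rw [map_pow, map_pow]
    exact pow_two_pos_of_ne_zero ((map_ne_zero σ).mpr
      ((map_ne_zero_iff _ (FaithfulSMul.algebraMap_injective _ _)).mpr ha₂))

theorem different_of_Q_zeta7_plus
    (K : Type*) [Field K] [NumberField K] (ζ : K) (hζ : IsPrimitiveRoot ζ 7)
    (F : IntermediateField ℚ K) (hF : F = IntermediateField.adjoin ℚ {ζ + ζ⁻¹})
    (a : 𝓞 F) (haF : ((algebraMap (𝓞 F) F a : F) : K) = ζ + ζ⁻¹)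
    (hgen : Algebra.adjoin ℤ {a} = ⊤) :
    differentIdeal ℤ (𝓞 F) = Ideal.span {(2 - a) ^ 2} ∧
    (∀ σ : F →+* ℝ, 0 < σ (algebraMap (𝓞 F) F ((2 - a) ^ 2))) :=
  different_of_Q_zeta7_plus_general K ζ hζ F a haF hgen
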